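/- arXiv:1907.04631 — 3 statements merged into one kernel-verified Lean document; each statement's English description precedes it below -/
import Mathlib

section
/- For a homogeneous polynomial g of degree n in N variables, Σ_{i=1}^N x_i (g D_i) = n·g + κ ( (N(N−1)/2) g − Σ_{i=1}^N g ω_i ), where D_i are the Dunkl operators and ω_i = Σ_{j>i} s_{ij} are the Jucys-Murphy elements acting on polynomials by permutation of variables. -/
open MvPolynomial

variable {F : Type*} [Field F] {N : ℕ}

/-- The canonical embedding of polynomials into the field of rational functions. -/
noncomputable def ι (F : Type*) [Field F] (N : ℕ) :
    MvPolynomial (Fin N) F →+* FractionRing (MvPolynomial (Fin N) F) :=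
  algebraMap _ _

/-- The divided difference `p ∂_{ij} = (p − p s_{ij})/(x_i − x_j)`, as a rational function. -/
noncomputable def ddiffK (i j : Fin N) (p : MvPolynomial (Fin N) F) :
    FractionRing (MvPolynomial (Fin N) F) :=
  (ι F N p - ι F N (rename (Equiv.swap i j) p)) / (ι F N (X i) - ι F N (X j))

/-- The Dunkl operator `p D_i = ∂_i p + κ Σ_{j≠i} p ∂_{ij}`, as a rational function. -/
noncomputable def dunklK (κ : F) (i : Fin N) (p : MvPolynomial (Fin N) F) :
    FractionRing (MvPolynomial (Fin N) F) :=
  ι F N (pderiv i p) + ι F N (C κ) * ∑ j ∈ Finset.univ.erase i, ddiffK i j p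

/-- The Jucys–Murphy operator on polynomials: `p ω_i = Σ_{j>i} p(x s_{ij})`. -/
noncomputable def omegaPoly (i : Fin N) (p : MvPolynomial (Fin N) F) :
    MvPolynomial (Fin N) F :=
  ∑ j ∈ Finset.univ.filter (fun j : Fin N => i < j), rename (Equiv.swap i j) p

/-- Euler's identity for a single monomial. -/
lemma euler_monomial (d : Fin N →₀ ℕ) (c : F) :
    ∑ i : Fin N, X i * pderiv i (monomial d c) = (∑ i : Fin N, d i) • monomial d c := by
  rw [Finset.sum_smul]
  refine Finset.sum_congr rfl fun i _ => ?_
  rw [pderiv_monomial]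
  rcases Nat.eq_zero_or_pos (d i) with h | h
  · simp [h]
  · have hle : Finsupp.single i 1 ≤ d := by
      rw [Finsupp.single_le_iff]; exact h
    rw [X, monomial_mul, one_mul, add_tsub_cancel_of_le hle, smul_monomial]
    congr 1
    rw [mul_comm, nsmul_eq_mul]

/-- Euler's identity for homogeneous polynomials. -/
lemma euler_identity {n : ℕ} {g : MvPolynomial (Fin N) F} (hg : g.IsHomogeneous n) :
    ∑ i : Fin N, X i * pderiv i g = n • g := by
  conv_lhs => rw [g.as_sum]
  conv_rhs => rw [g.as_sum]
  simp only [map_sum, Finset.mul_sum, Finset.smul_sum]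
  rw [Finset.sum_comm]
  refine Finset.sum_congr rfl fun d hd => ?_
  rw [euler_monomial]
  congr 1
  have hcd : coeff d g ≠ 0 := mem_support_iff.mp hd
  have hdeg : d.degree = n := by
    by_contra h
    exact hcd (hg.coeff_eq_zero h)
  rw [← hdeg, Finsupp.degree]
  exact (Finset.sum_subset (Finset.subset_univ _) (fun i _ hi => by
    simpa using Finsupp.notMem_support_iff.mp hi)).symm

lemma iota_injective : Function.Injective (ι F N) :=
  IsFractionRing.injective _ _

/-- Pairing of divided-difference terms. -/
lemma pair_aux {i j : Fin N} (hij : i ≠ j) (g : MvPolynomial (Fin N) F) :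
    ι F N (X i) * ddiffK i j g + ι F N (X j) * ddiffK j i g
      = ι F N g - ι F N (rename (Equiv.swap i j) g) := by
  have hx : ι F N (X i) - ι F N (X j) ≠ 0 := by
    rw [sub_ne_zero]
    exact fun h => hij (X_injective (iota_injective h))
  have hx' : ι F N (X j) - ι F N (X i) ≠ 0 := by
    rw [sub_ne_zero]; rw [sub_ne_zero] at hx; exact hx.symm
  rw [ddiffK, ddiffK, Equiv.swap_comm j i]
  field_simp
  ring

/-- Reorganize the off-diagonal double sum into a sum over `i < j` of symmetrized terms. -/
lemma reorg {M : Type*} [AddCommMonoid M] (f : Fin N → Fin N → M) :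
    (∑ i : Fin N, ∑ j ∈ Finset.univ.erase i, f i j)
      = ∑ i : Fin N, ∑ j ∈ Finset.univ.filter (fun j => i < j), (f i j + f j i) := by
  have h1 : ∀ i : Fin N, (Finset.univ.erase i) = Finset.univ.filter (· ≠ i) :=
    fun i => (Finset.filter_ne' _ _).symm
  calc (∑ i : Fin N, ∑ j ∈ Finset.univ.erase i, f i j)
      = ∑ i : Fin N, ∑ j : Fin N, (if j ≠ i then f i j else 0) := by
        simp only [h1, Finset.sum_filter]
    _ = ∑ i : Fin N, ∑ j : Fin N,
          ((if i < j then f i j else 0) + (if j < i then f i j else 0)) := by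
        refine Finset.sum_congr rfl fun i _ => Finset.sum_congr rfl fun j _ => ?_
        rcases lt_trichotomy i j with h | h | h
        · simp [h, h.ne', h.not_gt]
        · simp [h]
        · simp [h, h.ne, h.not_gt]
    _ = (∑ i : Fin N, ∑ j : Fin N, (if i < j then f i j else 0))
          + (∑ i : Fin N, ∑ j : Fin N, (if j < i then f i j else 0)) := by
        rw [← Finset.sum_add_distrib]
        exact Finset.sum_congr rfl fun i _ => Finset.sum_add_distrib
    _ = (∑ i : Fin N, ∑ j : Fin N, (if i < j then f i j else 0))
          + (∑ i : Fin N, ∑ j : Fin N, (if i < j then f j i else 0)) := by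
        congr 1
        exact Finset.sum_comm
    _ = ∑ i : Fin N, ∑ j : Fin N, (if i < j then f i j + f j i else 0) := by
        rw [← Finset.sum_add_distrib]
        refine Finset.sum_congr rfl fun i _ => ?_
        rw [← Finset.sum_add_distrib]
        refine Finset.sum_congr rfl fun j _ => ?_
        split <;> simp
    _ = ∑ i : Fin N, ∑ j ∈ Finset.univ.filter (fun j => i < j), (f i j + f j i) := by
        simp only [Finset.sum_filter]

lemma card_sum : (∑ i : Fin N, (Finset.univ.filter (fun j : Fin N => i < j)).card)
    = N * (N - 1) / 2 := by
  have h : ∀ i : Fin N, (Finset.univ.filter (fun j : Fin N => i < j)).card = N - 1 - i := by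
    intro i
    rw [show Finset.univ.filter (fun j : Fin N => i < j) = Finset.Ioi i by ext; simp,
      Fin.card_Ioi]
  simp only [h]
  rw [Fin.sum_univ_eq_sum_range (fun i => N - 1 - i), ← Finset.sum_range_reflect]
  rw [← Finset.sum_range_id N]
  refine Finset.sum_congr rfl fun i hi => ?_
  have := Finset.mem_range.mp hi
  omega

/-- For a homogeneous polynomial `g` of degree `n`,
`Σ_i x_i (g D_i) = n g + κ ((N(N−1)/2) g − Σ_i g ω_i)`. -/
theorem dunkl_euler_identity [CharZero F] (κ : F) (n : ℕ)
    (g : MvPolynomial (Fin N) F) (hg : g.IsHomogeneous n) :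
    ∑ i : Fin N, ι F N (X i) * dunklK κ i g =
      ι F N (C (n : F)) * ι F N g +
        ι F N (C κ) *
          (ι F N (C ((N * (N - 1) / 2 : ℕ) : F)) * ι F N g -
            ∑ i : Fin N, ι F N (omegaPoly i g)) := by
  have expand : ∑ i : Fin N, ι F N (X i) * dunklK κ i g
      = (∑ i : Fin N, ι F N (X i * pderiv i g))
        + ι F N (C κ) * ∑ i : Fin N, ∑ j ∈ Finset.univ.erase i,
            ι F N (X i) * ddiffK i j g := by
    rw [Finset.mul_sum, ← Finset.sum_add_distrib]
    refine Finset.sum_congr rfl fun i _ => ?_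
    rw [dunklK, mul_add, map_mul]
    congr 1
    rw [Finset.mul_sum, Finset.mul_sum, Finset.mul_sum]
    exact Finset.sum_congr rfl fun j _ => by ring
  rw [expand]
  -- Euler part
  have e1 : (∑ i : Fin N, ι F N (X i * pderiv i g)) = ι F N (C (n : F)) * ι F N g := by
    rw [← map_sum, euler_identity hg, ← map_mul]
    congr 1
    rw [nsmul_eq_mul, C_eq_coe_nat]
  -- pairing part
  have e2 : (∑ i : Fin N, ∑ j ∈ Finset.univ.erase i, ι F N (X i) * ddiffK i j g)
      = ι F N (C ((N * (N - 1) / 2 : ℕ) : F)) * ι F N g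
        - ∑ i : Fin N, ι F N (omegaPoly i g) := by
    rw [reorg (fun i j => ι F N (X i) * ddiffK i j g)]
    have step : ∀ i : Fin N, ∑ j ∈ Finset.univ.filter (fun j : Fin N => i < j),
        (ι F N (X i) * ddiffK i j g + ι F N (X j) * ddiffK j i g)
        = (Finset.univ.filter (fun j : Fin N => i < j)).card • ι F N g
          - ι F N (omegaPoly i g) := by
      intro i
      rw [omegaPoly, map_sum, ← Finset.sum_const, ← Finset.sum_sub_distrib]
      refine Finset.sum_congr rfl fun j hj => ?_
      exact pair_aux (Finset.mem_filter.mp hj).2.ne g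
    simp only [step]
    rw [Finset.sum_sub_distrib, ← Finset.sum_smul, card_sum, nsmul_eq_mul]
    congr 2
    rw [C_eq_coe_nat]
    exact (map_natCast _ _).symm
  rw [e1, e2]
end

section
/- Let τ be a partition of N and S a reverse standard Young tableau of shape τ with content vector ct_S[i] = col_S[i] − row_S[i]. Define the special values m, m_0 with m = d m_0, n = d n_0, κ_0 = −m_0/n_0, and α(S)_i = v(row_S[i]) with v(1)=0 and v(j)= m + (j−2)m_0 for j ≥ 2, where τ = (n−1, (n_0−1)^{l−2}, τ_l). Then for every 1 ≤ k ≤ N: α(S)_k + κ_0 (N − r(α(S),k)) = κ_0 · ct_S[k], where r is the rank function. -/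
/-- A reverse standard Young tableau of shape `τ` (a partition with `L` parts,
rows and columns `0`-indexed): a bijective placement of the entries `1,…,N`
(represented by `Fin N`) into the cells of the diagram of `τ`, with entries
decreasing along rows and along columns. -/
structure RSYT (L N : ℕ) (τ : Fin L → ℕ) where
  rowOf : Fin N → ℕ
  colOf : Fin N → ℕ
  hrow : ∀ k, rowOf k < L
  hcol : ∀ k, colOf k < τ ⟨rowOf k, hrow k⟩
  inj : ∀ k m, rowOf k = rowOf m → colOf k = colOf m → k = m
  rowDec : ∀ k m, rowOf k = rowOf m → colOf k < colOf m → m < k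
  colDec : ∀ k m, colOf k = colOf m → rowOf k < rowOf m → m < k

/-- The rank function of a composition `α` of length `N`:
`r(α,i) = #{j : α_j > α_i} + #{j ≤ i : α_j = α_i}`. -/
def rankf (N : ℕ) (α : Fin N → ℕ) (i : Fin N) : ℕ :=
  (Finset.univ.filter (fun j : Fin N => α i < α j)).card +
  (Finset.univ.filter (fun j : Fin N => j ≤ i ∧ α j = α i)).card

namespace QSaux

open Finset

variable {L N : ℕ} {τ : Fin L → ℕ}

/-- the set of cells of the diagram, as pairs (row, col) in ℕ × ℕ -/
def cells (L : ℕ) (τ : Fin L → ℕ) : Finset (ℕ × ℕ) :=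
  (univ : Finset (Fin L)).biUnion (fun i => (range (τ i)).image (fun c => ((i : ℕ), c)))

lemma card_cells : (cells L τ).card = ∑ i : Fin L, τ i := by
  rw [cells, card_biUnion]
  · refine Finset.sum_congr rfl fun i _ => ?_
    rw [card_image_of_injective _ (fun a b h => (Prod.mk.injEq _ _ _ _ ▸ h).2), card_range]
  · intro a _ b _ hab
    simp only [disjoint_left, mem_image, mem_range]
    rintro ⟨r, c⟩ ⟨c1, _, h1⟩ ⟨c2, _, h2⟩
    exact hab (Fin.ext ((congrArg Prod.fst h1).trans (congrArg Prod.fst h2).symm))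

lemma rsyt_surj (S : RSYT L N τ) (hcard : ∑ i : Fin L, τ i = N) (i : Fin L) (c : ℕ)
    (hc : c < τ i) : ∃ j : Fin N, S.rowOf j = (i : ℕ) ∧ S.colOf j = c := by
  set f : Fin N → ℕ × ℕ := fun j => (S.rowOf j, S.colOf j) with hf
  have hinj : Function.Injective f := by
    intro a b hab
    exact S.inj a b (congrArg Prod.fst hab) (congrArg Prod.snd hab)
  have hsub : (univ : Finset (Fin N)).image f ⊆ cells L τ := by
    intro p hp
    obtain ⟨j, _, rfl⟩ := mem_image.mp hp
    exact mem_biUnion.mpr ⟨⟨S.rowOf j, S.hrow j⟩, mem_univ _,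
      mem_image.mpr ⟨S.colOf j, mem_range.mpr (S.hcol j), rfl⟩⟩
  have heq : (univ : Finset (Fin N)).image f = cells L τ := by
    apply Finset.eq_of_subset_of_card_le hsub
    rw [card_cells, hcard, card_image_of_injective _ hinj, card_univ, Fintype.card_fin]
  have : ((i : ℕ), c) ∈ cells L τ :=
    mem_biUnion.mpr ⟨i, mem_univ _, mem_image.mpr ⟨c, mem_range.mpr hc, rfl⟩⟩
  rw [← heq] at this
  obtain ⟨j, _, hj⟩ := mem_image.mp this
  exact ⟨j, congrArg Prod.fst hj, congrArg Prod.snd hj⟩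

lemma fiber_card (S : RSYT L N τ) (hcard : ∑ i : Fin L, τ i = N) (i : Fin L) :
    ((univ : Finset (Fin N)).filter (fun j => S.rowOf j = (i : ℕ))).card = τ i := by
  rw [← Finset.card_range (τ i)]
  apply Finset.card_bij (fun j _ => S.colOf j)
  · intro a ha
    have hr : S.rowOf a = (i : ℕ) := (mem_filter.mp ha).2
    have := S.hcol a
    rw [mem_range]
    have : (⟨S.rowOf a, S.hrow a⟩ : Fin L) = i := Fin.ext hr
    rw [← this]
    exact S.hcol a
  · intro a ha b hb hab
    exact S.inj a b ((mem_filter.mp ha).2.trans (mem_filter.mp hb).2.symm) hab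
  · intro c hc
    obtain ⟨j, hj1, hj2⟩ := rsyt_surj S hcard i c (mem_range.mp hc)
    exact ⟨j, mem_filter.mpr ⟨mem_univ _, hj1⟩, hj2⟩

lemma same_row_card (S : RSYT L N τ) (hcard : ∑ i : Fin L, τ i = N) (k : Fin N) :
    ((univ : Finset (Fin N)).filter (fun j => j ≤ k ∧ S.rowOf j = S.rowOf k)).card
      = τ ⟨S.rowOf k, S.hrow k⟩ - S.colOf k := by
  rw [← Nat.card_Ico]
  apply Finset.card_bij (fun j _ => S.colOf j)
  · intro a ha
    obtain ⟨-, hle, hr⟩ := mem_filter.mp ha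
    rw [Finset.mem_Ico]
    constructor
    · by_contra h
      exact absurd (S.rowDec a k hr (by omega)) (by omega)
    · have : (⟨S.rowOf a, S.hrow a⟩ : Fin L) = ⟨S.rowOf k, S.hrow k⟩ := Fin.ext hr
      rw [← this]; exact S.hcol a
  · intro a ha b hb hab
    exact S.inj a b ((mem_filter.mp ha).2.2.trans (mem_filter.mp hb).2.2.symm) hab
  · intro c hc
    rw [Finset.mem_Ico] at hc
    obtain ⟨j, hj1, hj2⟩ := rsyt_surj S hcard ⟨S.rowOf k, S.hrow k⟩ c hc.2
    refine ⟨j, mem_filter.mpr ⟨mem_univ _, ?_, hj1⟩, hj2⟩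
    rcases Nat.lt_or_ge (S.colOf k) (S.colOf j) with h | h
    · exact le_of_lt (S.rowDec k j hj1.symm h)
    · rcases Nat.eq_or_lt_of_le h with h' | h'
      · exact le_of_eq (S.inj j k hj1 h')
      · omega

lemma gt_row_card (S : RSYT L N τ) (hcard : ∑ i : Fin L, τ i = N)
    (g : ℕ → ℕ) (hg : ∀ i : Fin L, τ i = g (i : ℕ)) (k : Fin N) :
    ((univ : Finset (Fin N)).filter (fun j => S.rowOf k < S.rowOf j)).card
      = ∑ i ∈ Finset.Ico (S.rowOf k + 1) L, g i := by
  have H : ∀ x ∈ (univ : Finset (Fin N)).filter (fun j => S.rowOf k < S.rowOf j),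
      S.rowOf x ∈ Finset.Ico (S.rowOf k + 1) L :=
    fun x hx => Finset.mem_Ico.mpr ⟨(mem_filter.mp hx).2, S.hrow x⟩
  rw [Finset.card_eq_sum_card_fiberwise H]
  refine Finset.sum_congr rfl fun b hb => ?_
  rw [Finset.mem_Ico] at hb
  have h1 : ((univ : Finset (Fin N)).filter (fun j => S.rowOf k < S.rowOf j)).filter
      (fun j => S.rowOf j = b) = (univ : Finset (Fin N)).filter (fun j => S.rowOf j = (b : ℕ)) := by
    ext j
    simp only [mem_filter, mem_univ, true_and]
    constructor
    · rintro ⟨-, h⟩; exact h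
    · intro h; exact ⟨by omega, h⟩
  rw [h1, fiber_card S hcard ⟨b, hb.2⟩, hg]

end QSaux

/-- For the quasistaircase data `m = d m₀`, `n = d n₀`, `κ₀ = −m₀/n₀`, the shape
`τ = (n−1, (n₀−1)^{l−2}, τ_l)` and `S` an RSYT of shape `τ` with associated
reverse lattice permutation `α(S)_i = v(row_S[i])` (`v(1) = 0`,
`v(j) = m + (j−2)m₀` for `j ≥ 2`; rows `0`-indexed here), one has, for all `k`,
`α(S)_k + κ₀ (N − r(α(S),k)) = κ₀ · ct_S[k]`. -/
theorem quasistaircase_spectral_identity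
    (N m n d m0 n0 l τl : ℕ)
    (hn2 : 2 ≤ n) (hnN : n ≤ N)
    (hd : d = Nat.gcd m n) (hm : m = d * m0) (hn : n = d * n0)
    (hnotnat : ¬ n ∣ m) (hn0 : 2 ≤ n0) (hl2 : 2 ≤ l)
    (hl : l = (N - n + 1 + (n0 - 2)) / (n0 - 1) + 1)
    (hτl : τl ≤ n0 - 2)
    (hN : N = (n - 1) + (l - 2) * (n0 - 1) + τl)
    (S : RSYT l N (fun i : Fin l =>
      if (i : ℕ) = 0 then n - 1 else if (i : ℕ) = l - 1 then τl else n0 - 1))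
    (α : Fin N → ℕ)
    (hα : ∀ k : Fin N, α k = if S.rowOf k = 0 then 0 else m + (S.rowOf k - 1) * m0)
    (κ0 : ℚ) (hκ0 : κ0 = -(m0 : ℚ) / (n0 : ℚ)) :
    ∀ k : Fin N,
      (α k : ℚ) + κ0 * ((N : ℚ) - (rankf N α k : ℚ)) =
        κ0 * ((S.colOf k : ℚ) - (S.rowOf k : ℚ)) := by
  intro k
  have hm1 : 1 ≤ m := by
    rcases Nat.eq_zero_or_pos m with h | h
    · exact absurd (h ▸ dvd_zero n) hnotnat
    · exact h
  have hm0 : 1 ≤ m0 := by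
    rcases Nat.eq_zero_or_pos m0 with h | h
    · have : m = 0 := by rw [hm, h, mul_zero]
      omega
    · exact h
  -- the row lengths as a function on ℕ
  set gnat : ℕ → ℕ := fun i => if i = 0 then n - 1 else if i = l - 1 then τl else n0 - 1
    with hgdef
  -- partial sums of row lengths
  have hsum1 : ∀ j, 1 ≤ j → j ≤ l - 1 →
      ∑ i ∈ Finset.range j, gnat i = (n - 1) + (j - 1) * (n0 - 1) := by
    intro j
    induction j with
    | zero => omega
    | succ j ih =>
      intro h1 h2
      rcases Nat.eq_or_lt_of_le h1 with h | h
      · have : j = 0 := by omega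
        subst this
        simp [hgdef]
      · have hj1 : 1 ≤ j := by omega
        rw [Finset.sum_range_succ, ih hj1 (by omega)]
        have hgj : gnat j = n0 - 1 := by
          rw [hgdef]
          simp only
          rw [if_neg (by omega), if_neg (by omega)]
        rw [hgj]
        obtain ⟨jj, rfl⟩ : ∃ jj, j = jj + 1 := ⟨j - 1, by omega⟩
        simp only [Nat.add_sub_cancel]
        ring
  have htot : ∑ i ∈ Finset.range l, gnat i = N := by
    obtain ⟨l', hl'⟩ : ∃ l', l = l' + 1 := ⟨l - 1, by omega⟩
    rw [hl', Finset.sum_range_succ, hsum1 l' (by omega) (by omega)]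
    have hgl : gnat l' = τl := by
      rw [hgdef]
      simp only
      rw [if_neg (by omega), if_pos (by omega)]
    rw [hgl, hN]
    have h12 : l - 2 = l' - 1 := by omega
    rw [h12]
  have hcard : ∑ i : Fin l,
      (if (i : ℕ) = 0 then n - 1 else if (i : ℕ) = l - 1 then τl else n0 - 1) = N := by
    rw [← htot, ← Fin.sum_univ_eq_sum_range gnat l]
  -- counting lemmas
  have hgt := QSaux.gt_row_card S hcard gnat (fun i => rfl) k
  have hsr := QSaux.same_row_card S hcard k
  have hcolk : S.colOf k < gnat (S.rowOf k) := S.hcol k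
  -- α is a strictly monotone function of the row
  have hv : StrictMono (fun r : ℕ => if r = 0 then 0 else m + (r - 1) * m0) := by
    apply strictMono_nat_of_lt_succ
    intro r
    rcases r with _ | s
    · simpa using (show 0 < m by omega)
    · simp only [Nat.succ_ne_zero, if_false, Nat.add_sub_cancel]
      exact Nat.add_lt_add_left ((Nat.mul_lt_mul_right hm0).mpr (Nat.lt_succ_self s)) m
  have hαlt : ∀ a b : Fin N, (α a < α b ↔ S.rowOf a < S.rowOf b) := by
    intro a b
    rw [hα a, hα b]
    exact hv.lt_iff_lt
  have hαeq : ∀ a b : Fin N, (α a = α b ↔ S.rowOf a = S.rowOf b) := by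
    intro a b
    rw [hα a, hα b]
    exact ⟨fun h => hv.injective h, fun h => by rw [h]⟩
  -- computing the rank
  have hrank : rankf N α k =
      (∑ i ∈ Finset.Ico (S.rowOf k + 1) l, gnat i) + (gnat (S.rowOf k) - S.colOf k) := by
    rw [rankf]
    congr 1
    · rw [← hgt]
      apply congrArg
      apply Finset.filter_congr
      intro j _
      exact hαlt k j
    · rw [← hsr]
      apply congrArg
      apply Finset.filter_congr
      intro j _
      exact and_congr_right (fun _ => hαeq j k)
  have hIco : ∑ i ∈ Finset.range (S.rowOf k + 1), gnat i
      + ∑ i ∈ Finset.Ico (S.rowOf k + 1) l, gnat i = N := by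
    rw [Finset.range_eq_Ico, Finset.sum_Ico_consecutive gnat (Nat.zero_le _)
      (by have := S.hrow k; omega), ← Finset.range_eq_Ico]
    exact htot
  have hrank' : rankf N α k + S.colOf k + ∑ i ∈ Finset.range (S.rowOf k + 1), gnat i
      = N + gnat (S.rowOf k) := by
    rw [hrank]
    omega
  have hn0Q : (n0 : ℚ) ≠ 0 := by positivity
  by_cases h0 : S.rowOf k = 0
  · rw [h0] at hrank'
    rw [Finset.sum_range_one] at hrank'
    have hq : (rankf N α k : ℚ) + (S.colOf k : ℚ) = (N : ℚ) := by
      exact_mod_cast congrArg (Nat.cast (R := ℚ)) (by omega : rankf N α k + S.colOf k = N)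
    rw [hα k, if_pos h0, h0]
    push_cast
    linear_combination (-κ0) * hq
  · obtain ⟨jj, hjj⟩ : ∃ jj, S.rowOf k = jj + 1 := ⟨S.rowOf k - 1, by omega⟩
    have hjl : jj + 1 < l := hjj ▸ S.hrow k
    rw [hjj] at hrank'
    have hrange : ∑ i ∈ Finset.range (jj + 1 + 1), gnat i
        = (n - 1) + jj * (n0 - 1) + gnat (jj + 1) := by
      rw [Finset.sum_range_succ, hsum1 (jj + 1) (by omega) (by omega), Nat.add_sub_cancel]
    rw [hrange] at hrank'
    have key : rankf N α k + S.colOf k + ((n - 1) + jj * (n0 - 1)) = N := by omega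
    have hq : (rankf N α k : ℚ) + (S.colOf k : ℚ)
        + (((n : ℚ) - 1) + (jj : ℚ) * ((n0 : ℚ) - 1)) = (N : ℚ) := by
      have := congrArg (Nat.cast (R := ℚ)) key
      push_cast [Nat.cast_sub (by omega : 1 ≤ n), Nat.cast_sub (by omega : 1 ≤ n0)] at this
      linarith
    have hmn : (m : ℚ) * (n0 : ℚ) = (m0 : ℚ) * (n : ℚ) := by
      rw [hm, hn]
      push_cast
      ring
    rw [hα k, if_neg h0, hjj, Nat.add_sub_cancel, hκ0]
    push_cast
    field_simp
    linear_combination (m0 : ℚ) * hq + hmn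
end

section
/- In the symmetric group S_N, the Cherednik operators U_i on polynomials satisfy s_i U_i s_i = U_{i+1} + κ s_i as operators, where U_i = D_i x_i + 1 + κ ω_i, D_i is the Dunkl operator, and ω_i = Σ_{j>i} s_{ij}. -/
open MvPolynomial

variable {F : Type*} [Field F] {N : ℕ}

/-- The Cherednik operator `p U_i = (x_i p) D_i + p + κ (p ω_i)`, as a rational function. -/
noncomputable def cherednikK (κ : F) (i : Fin N) (p : MvPolynomial (Fin N) F) :
    FractionRing (MvPolynomial (Fin N) F) :=
  dunklK κ i (X i * p) + ι F N p + ι F N (C κ) * ι F N (omegaPoly i p)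

/-- The action of the transposition of the variables `x_i, x_j` on rational functions. -/
noncomputable def swapK (F : Type*) [Field F] {N : ℕ} (i j : Fin N) :
    FractionRing (MvPolynomial (Fin N) F) ≃+* FractionRing (MvPolynomial (Fin N) F) :=
  IsFractionRing.ringEquivOfRingEquiv (MvPolynomial.renameEquiv F (Equiv.swap i j)).toRingEquiv


set_option synthInstance.maxHeartbeats 1000000
set_option maxHeartbeats 2000000

lemma swapK_ι (a b : Fin N) (f : MvPolynomial (Fin N) F) :
    swapK F a b (ι F N f) = ι F N (rename (Equiv.swap a b) f) := by
  simpa [swapK, ι] using IsFractionRing.ringEquivOfRingEquiv_algebraMap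
    (MvPolynomial.renameEquiv F (Equiv.swap a b)).toRingEquiv f

lemma rename_swap_swap (a b i j : Fin N) (f : MvPolynomial (Fin N) F) :
    rename (Equiv.swap a b) (rename (Equiv.swap i j) f)
      = rename (Equiv.swap (Equiv.swap a b i) (Equiv.swap a b j))
          (rename (Equiv.swap a b) f) := by
  rw [rename_rename, rename_rename]
  have h : (⇑(Equiv.swap a b) ∘ ⇑(Equiv.swap i j))
      = (⇑(Equiv.swap ((Equiv.swap a b) i) ((Equiv.swap a b) j)) ∘ ⇑(Equiv.swap a b)) := by
    funext x
    simp [Function.comp, Equiv.swap_apply_apply]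
  rw [h]

lemma swapK_ddiffK (a b i j : Fin N) (f : MvPolynomial (Fin N) F) :
    swapK F a b (ddiffK i j f)
      = ddiffK (Equiv.swap a b i) (Equiv.swap a b j) (rename (Equiv.swap a b) f) := by
  unfold ddiffK
  rw [map_div₀, map_sub, map_sub, swapK_ι, swapK_ι, swapK_ι, swapK_ι,
    rename_swap_swap, rename_X, rename_X]

lemma swapK_dunklK (a b : Fin N) (hab : a ≠ b) (κ : F) (f : MvPolynomial (Fin N) F) :
    swapK F a b (dunklK κ a f) = dunklK κ b (rename (Equiv.swap a b) f) := by
  unfold dunklK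
  rw [map_add, map_mul, swapK_ι, swapK_ι, rename_C, map_sum]
  congr 1
  · have h := pderiv_rename (Equiv.swap a b).injective a f
    rw [Equiv.swap_apply_left] at h
    rw [← h]
  congr 1
  refine Finset.sum_equiv (Equiv.swap a b) (fun j => ?_) (fun j hj => ?_)
  · simp only [Finset.mem_erase, Finset.mem_univ, and_true]
    constructor
    · intro h h'
      exact h ((Equiv.swap a b).injective (by simpa [Equiv.swap_apply_left] using h'))
    · intro h h'
      exact h (by rw [h', Equiv.swap_apply_left])
  · rw [swapK_ddiffK, Equiv.swap_apply_left]

lemma rename_rename_swap_self (a b : Fin N) (p : MvPolynomial (Fin N) F) :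
    rename (Equiv.swap a b) (rename (Equiv.swap a b) p) = p := by
  rw [rename_rename]
  have h : (⇑(Equiv.swap a b) ∘ ⇑(Equiv.swap a b)) = id := by
    funext x; simp
  rw [h, rename_id, AlgHom.id_apply]

lemma rename_swap_omega (i : ℕ) (hi : i + 1 < N) (p : MvPolynomial (Fin N) F) :
    rename (Equiv.swap (⟨i, Nat.lt_of_succ_lt hi⟩ : Fin N) ⟨i + 1, hi⟩)
        (omegaPoly (⟨i, Nat.lt_of_succ_lt hi⟩ : Fin N)
          (rename (Equiv.swap (⟨i, Nat.lt_of_succ_lt hi⟩ : Fin N) ⟨i + 1, hi⟩) p))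
      = rename (Equiv.swap (⟨i, Nat.lt_of_succ_lt hi⟩ : Fin N) ⟨i + 1, hi⟩) p
          + omegaPoly (⟨i + 1, hi⟩ : Fin N) p := by
  set a : Fin N := ⟨i, Nat.lt_of_succ_lt hi⟩ with ha
  set b : Fin N := ⟨i + 1, hi⟩ with hb
  have hab : a ≠ b := by simp [ha, hb, Fin.ext_iff]
  unfold omegaPoly
  rw [map_sum]
  have hterm : ∀ j : Fin N,
      rename (Equiv.swap a b) (rename (Equiv.swap a j) (rename (Equiv.swap a b) p))
        = rename (Equiv.swap b (Equiv.swap a b j)) p := by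
    intro j
    rw [rename_swap_swap, Equiv.swap_apply_left, rename_rename_swap_self]
  have hfilt : (Finset.univ.filter (fun j : Fin N => a < j))
      = insert b (Finset.univ.filter (fun j : Fin N => b < j)) := by
    ext j
    simp only [Finset.mem_filter, Finset.mem_univ, true_and, Finset.mem_insert]
    rw [Fin.lt_def, Fin.lt_def]
    simp only [ha, hb, Fin.ext_iff]
    omega
  rw [hfilt, Finset.sum_insert (by simp), hterm, Equiv.swap_apply_right,
    Equiv.swap_comm b a]
  congr 1
  refine Finset.sum_congr rfl (fun j hj => ?_)
  simp only [Finset.mem_filter, Finset.mem_univ, true_and] at hj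
  rw [hterm, Equiv.swap_apply_of_ne_of_ne]
  · exact ne_of_gt (lt_trans (show a < b by rw [Fin.lt_def]; simp [ha, hb]) hj)
  · exact ne_of_gt hj

/-- The commutation relation `s_i U_i s_i = U_{i+1} + κ s_i` for the Cherednik operators:
for every polynomial `p`, `((p s_i) U_i) s_i = p U_{i+1} + κ (p s_i)`. -/
theorem cherednik_commutation (κ : F) (i : ℕ) (hi : i + 1 < N)
    (p : MvPolynomial (Fin N) F) :
    swapK F (⟨i, by omega⟩ : Fin N) ⟨i + 1, hi⟩
        (cherednikK κ ⟨i, by omega⟩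
          (rename (Equiv.swap (⟨i, by omega⟩ : Fin N) ⟨i + 1, hi⟩) p)) =
      cherednikK κ ⟨i + 1, hi⟩ p +
        ι F N (C κ) * ι F N (rename (Equiv.swap (⟨i, by omega⟩ : Fin N) ⟨i + 1, hi⟩) p) := by
  set a : Fin N := ⟨i, by omega⟩ with ha
  set b : Fin N := ⟨i + 1, hi⟩ with hb
  have hab : a ≠ b := by simp [ha, hb, Fin.ext_iff]
  unfold cherednikK
  rw [map_add, map_add, map_mul, swapK_ι, swapK_ι, swapK_ι, rename_C,
    swapK_dunklK a b hab, rename_rename_swap_self,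
    show rename (⇑(Equiv.swap a b)) (X a * rename (⇑(Equiv.swap a b)) p)
        = X b * p by
      rw [map_mul, rename_X, Equiv.swap_apply_left, rename_rename_swap_self],
    rename_swap_omega i hi p, map_add]
  ring
end
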